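/- Let τ^s_x = inf{t > s : ν^{s,t}_x ≥ 2} and B(φ) = {(s,x) : τ^s_x = s} the set of bifurcation points. If τ^s_x < ∞, then (τ^s_x, θ_{s,τ^s_x}(x)) ∈ B(φ), i.e. the flow extension hits a bifurcation point at time τ^s_x. -/

import Mathlib

open Set Filter

noncomputable section

variable {M : Type*} [MetricSpace M] [ProperSpace M] [TopologicalSpace.SeparableSpace M]

def truncPath (f : C(ℝ, M)) (a b : ℝ) : C(ℝ, M) :=
  f.comp ⟨fun t => max a (min b t),
    continuous_const.max (continuous_const.min continuous_id)⟩

def restrictPath (f : C(ℝ, M)) (r : ℝ) : ℝ × C(ℝ, M) :=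
  (r, f.comp ⟨fun t => max r t, continuous_const.max continuous_id⟩)

variable (s : ℕ → ℝ) (φ : ℕ → C(ℝ, M))

def Keps (a b : ℝ) (x : M) (ε : ℝ) : Set C(ℝ, M) :=
  closure {g | ∃ n, s n ≤ a ∧ dist (φ n a) x < ε ∧ g = truncPath (φ n) a b}

def Kx (a b : ℝ) (x : M) : Set C(ℝ, M) := ⋂ ε > (0 : ℝ), Keps s φ a b x ε

def nu (a b : ℝ) (x : M) : ℕ∞ := (Kx s φ a b x).encard

/-- The set `{t > a : ν^{a,t}_x ≥ 2}`, whose infimum is `τ^a_x`. -/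
def bifSet (a : ℝ) (x : M) : Set ℝ := {t | a < t ∧ 2 ≤ nu s φ a t x}

/-- The set of bifurcation points `B(φ) = {(a,x) : τ^a_x = a}`. -/
def bifPoints : Set (ℝ × M) :=
  {q | (bifSet s φ q.1 q.2).Nonempty ∧ sInf (bifSet s φ q.1 q.2) = q.1}

/-! Below `τ = τ^a_x` every `K^{a,u}_x` is the singleton `{θ_{a,·}(x)}`, so, these sets being
closed under truncation and their elements being continuous, every element of `K^{a,b}_x`
with `b ≥ τ` follows `θ_{a,·}(x)` on `[a, τ]`. Hence `ν^{a,τ}_x = 1`, and for `t > τ`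
restriction to `[τ, t]` maps `K^{a,t}_x` injectively into `K^{τ,t}_y` with `y = θ_{a,τ}(x)`.
So the set `{t > a : ν^{a,t}_x ≥ 2}` lies in `{t > τ : ν^{τ,t}_y ≥ 2}`, whose infimum is
then `τ`. -/

section
omit [ProperSpace M] [TopologicalSpace.SeparableSpace M]

theorem truncPath_apply (f : C(ℝ, M)) (a b t : ℝ) :
    truncPath f a b t = f (max a (min b t)) :=
  rfl

theorem truncPath_apply_of_mem_Icc (f : C(ℝ, M)) {a b t : ℝ} (ht : t ∈ Icc a b) :
    truncPath f a b t = f t := by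
  rw [truncPath_apply, min_eq_right ht.2, max_eq_right ht.1]

theorem truncPath_truncPath (f : C(ℝ, M)) {a b a' b' : ℝ} (ha : a ≤ a') (hb : b' ≤ b)
    (h : a' ≤ b) : truncPath (truncPath f a b) a' b' = truncPath f a' b' := by
  ext t
  exact truncPath_apply_of_mem_Icc f
    ⟨ha.trans (le_max_left _ _), max_le h ((min_le_left _ _).trans hb)⟩

theorem truncPath_eq_of_eqOn {f g : C(ℝ, M)} {a b : ℝ} (hab : a ≤ b)
    (h : EqOn f g (Icc a b)) : truncPath f a b = truncPath g a b := by
  ext t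
  exact h ⟨le_max_left _ _, max_le hab (min_le_left _ _)⟩

theorem continuous_truncPath (a b : ℝ) : Continuous fun f : C(ℝ, M) => truncPath f a b :=
  ContinuousMap.continuous_precomp _

variable {a b c : ℝ} {x : M} {g g₁ g₂ : C(ℝ, M)}

theorem mem_Keps_of_mem_Kx (hg : g ∈ Kx s φ a b x) {ε : ℝ} (hε : 0 < ε) :
    g ∈ Keps s φ a b x ε :=
  mem_iInter₂.1 hg ε hε

theorem truncPath_mem_Kx (hac : a ≤ c) (hcb : c ≤ b) (hg : g ∈ Kx s φ a b x) :
    truncPath g a c ∈ Kx s φ a c x := by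
  refine mem_iInter₂.2 fun ε hε => ?_
  refine map_mem_closure (f := fun f => truncPath f a c) (continuous_truncPath a c) (mem_Keps_of_mem_Kx s φ hg hε) ?_
  rintro _ ⟨n, hn, hdist, rfl⟩
  exact ⟨n, hn, hdist, truncPath_truncPath (φ n) le_rfl hcb (hac.trans hcb)⟩

theorem truncPath_eq_self_of_mem_Kx (hab : a ≤ b) (hg : g ∈ Kx s φ a b x) :
    truncPath g a b = g := by
  refine closure_minimal ?_ (isClosed_eq (continuous_truncPath a b) continuous_id)
    (mem_Keps_of_mem_Kx s φ hg one_pos)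
  rintro _ ⟨n, -, -, rfl⟩
  exact truncPath_truncPath (φ n) le_rfl le_rfl hab

theorem eq_of_eqOn_of_mem_Kx (hab : a ≤ b) (h₁ : g₁ ∈ Kx s φ a b x) (h₂ : g₂ ∈ Kx s φ a b x)
    (h : EqOn g₁ g₂ (Icc a b)) : g₁ = g₂ :=
  calc g₁ = truncPath g₁ a b := (truncPath_eq_self_of_mem_Kx s φ hab h₁).symm
    _ = truncPath g₂ a b := truncPath_eq_of_eqOn hab h
    _ = g₂ := truncPath_eq_self_of_mem_Kx s φ hab h₂

-- The skeleton paths approximating `g` pass close to `g c` at time `c`.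
theorem truncPath_mem_Kx_restart (hac : a ≤ c) (hcb : c ≤ b) (hg : g ∈ Kx s φ a b x) :
    truncPath g c b ∈ Kx s φ c b (g c) := by
  refine mem_iInter₂.2 fun ε hε => ?_
  have hW : IsOpen {f : C(ℝ, M) | dist (f c) (g c) < ε} :=
    isOpen_lt ((continuous_eval_const c).dist continuous_const) continuous_const
  have hgW := hW.inter_closure ⟨by simpa using hε, mem_Keps_of_mem_Kx s φ hg one_pos⟩
  refine map_mem_closure (f := fun f => truncPath f c b) (continuous_truncPath c b) hgW ?_
  rintro _ ⟨hdist, n, hn, -, rfl⟩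
  refine ⟨n, hn.trans hac, ?_, truncPath_truncPath (φ n) hac le_rfl hcb⟩
  rw [← truncPath_apply_of_mem_Icc (φ n) ⟨hac, hcb⟩]
  exact hdist

theorem mem_bifSet_iff {t : ℝ} :
    t ∈ bifSet s φ a x ↔ a < t ∧ (Kx s φ a t x).Nontrivial := by
  rw [← one_lt_encard_iff_nontrivial, ← ENat.add_one_le_iff ENat.one_ne_top]
  rfl

theorem Kx_subsingleton_of_lt_sInf (hac : a < c) (hc : c < sInf (bifSet s φ a x)) :
    (Kx s φ a c x).Subsingleton := by
  by_contra h
  have hmem : c ∈ bifSet s φ a x := (mem_bifSet_iff s φ).2 ⟨hac, not_subsingleton_iff.1 h⟩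
  exact (csInf_le ⟨a, fun t ht => ht.1.le⟩ hmem).not_gt hc

theorem Kx_subsingleton_of_eqOn {γ : C(ℝ, M)} (hab : a ≤ b)
    (h : ∀ g ∈ Kx s φ a b x, EqOn g γ (Icc a b)) : (Kx s φ a b x).Subsingleton :=
  fun _ h₁ _ h₂ => eq_of_eqOn_of_mem_Kx s φ hab h₁ h₂ ((h _ h₁).trans (h _ h₂).symm)

theorem eqOn_Icc_of_mem_Kx {γ : C(ℝ, M)} (hac : a < c) (hcb : c ≤ b)
    (hγ : ∀ u ∈ Ioo a c, truncPath γ a u ∈ Kx s φ a u x)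
    (hsub : ∀ u ∈ Ioo a c, (Kx s φ a u x).Subsingleton) (hg : g ∈ Kx s φ a b x) :
    EqOn g γ (Icc a c) := by
  have hIco : EqOn g γ (Ico a c) := by
    intro v hv
    obtain ⟨u, hvu, huc⟩ := exists_between hv.2
    have hu : u ∈ Ioo a c := ⟨hv.1.trans_lt hvu, huc⟩
    have hvu' : v ∈ Icc a u := ⟨hv.1, hvu.le⟩
    rw [← truncPath_apply_of_mem_Icc g hvu', ← truncPath_apply_of_mem_Icc γ hvu',
      hsub u hu (truncPath_mem_Kx s φ hu.1.le (huc.le.trans hcb) hg) (hγ u hu)]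
  rw [← closure_Ico hac.ne]
  exact hIco.closure g.continuous γ.continuous

theorem mem_bifSet_of_eqOn {γ : C(ℝ, M)} {t : ℝ} (hac : a ≤ c) (hct : c < t)
    (ht : t ∈ bifSet s φ a x) (h : ∀ g ∈ Kx s φ a t x, EqOn g γ (Icc a c)) :
    t ∈ bifSet s φ c (γ c) := by
  obtain ⟨-, g₁, h₁, g₂, h₂, hne⟩ := (mem_bifSet_iff s φ).1 ht
  have hrestart : ∀ g ∈ Kx s φ a t x, truncPath g c t ∈ Kx s φ c t (γ c) := fun g hg => by
    simpa only [h g hg ⟨hac, le_rfl⟩] using truncPath_mem_Kx_restart s φ hac hct.le hg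
  refine (mem_bifSet_iff s φ).2
    ⟨hct, _, hrestart g₁ h₁, _, hrestart g₂ h₂, fun heq => hne ?_⟩
  refine eq_of_eqOn_of_mem_Kx s φ (hac.trans hct.le) h₁ h₂ fun v hv => ?_
  rcases le_total v c with hvc | hcv
  · exact (h g₁ h₁ ⟨hv.1, hvc⟩).trans (h g₂ h₂ ⟨hv.1, hvc⟩).symm
  · have hv' : v ∈ Icc c t := ⟨hcv, hv.2⟩
    rw [← truncPath_apply_of_mem_Icc g₁ hv', heq, truncPath_apply_of_mem_Icc g₂ hv']

end

theorem hits_bifurcation_point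
    (θ : ℝ → M → ℝ → M)
    (hθcont : ∀ a x, Continuous (θ a x))
    (hθstart : ∀ a x, θ a x a = x)
    (hθK : ∀ (a : ℝ) (x : M) (b : ℝ), a < b →
      (⟨fun t => θ a x (max a (min b t)),
        (hθcont a x).comp
          (continuous_const.max (continuous_const.min continuous_id))⟩ : C(ℝ, M))
        ∈ Kx s φ a b x) :
    ∀ (a : ℝ) (x : M), (bifSet s φ a x).Nonempty →
      (sInf (bifSet s φ a x), θ a x (sInf (bifSet s φ a x))) ∈ bifPoints s φ := by
  intro a x hne
  have hbdd : ∀ c y, BddBelow (bifSet s φ c y) := fun c y => ⟨c, fun t ht => ht.1.le⟩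
  generalize hτdef : sInf (bifSet s φ a x) = τ
  rcases (hτdef ▸ le_csInf hne fun t ht => ht.1.le : a ≤ τ).eq_or_lt with rfl | haτ
  · rw [hθstart]
    exact ⟨hne, hτdef⟩
  let γ : C(ℝ, M) := ⟨θ a x, hθcont a x⟩
  have hagree : ∀ b, τ ≤ b → ∀ g ∈ Kx s φ a b x, EqOn g γ (Icc a τ) := fun b hb g hg =>
    eqOn_Icc_of_mem_Kx s φ haτ hb (fun u hu => hθK a x u hu.1)
      (fun u hu => Kx_subsingleton_of_lt_sInf s φ hu.1 (hτdef ▸ hu.2)) hg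
  have hτ : τ ∉ bifSet s φ a x := fun hτ => ((mem_bifSet_iff s φ).1 hτ).2.not_subsingleton
    (Kx_subsingleton_of_eqOn s φ haτ.le (hagree τ le_rfl))
  have hsub : bifSet s φ a x ⊆ bifSet s φ τ (γ τ) := fun t ht =>
    have hτt : τ < t := (hτdef ▸ csInf_le (hbdd a x) ht).lt_of_ne fun h => hτ (h ▸ ht)
    mem_bifSet_of_eqOn s φ haτ.le hτt ht (hagree t hτt.le)
  exact ⟨hne.mono hsub, (hτdef ▸ csInf_le_csInf (hbdd _ _) hne hsub).antisymm
    (le_csInf (hne.mono hsub) fun t ht => ht.1.le)⟩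

end
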